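/- Let W = W⁺ ⊕ W⁻ be a finite-dimensional ℤ/2-graded complex inner product space and D an odd self-adjoint operator on W (i.e. D maps W± to W∓ and D* = D). Then the function t ↦ Str(e^{−tD²}) is constant on (0,∞), and its value equals the index dim ker(D|_{W⁺}) − dim ker(D|_{W⁻}) (McKean–Singer formula in finite dimensions). -/

import Mathlib

/-!
Diagonalize `D = U Λ U*`. Oddness says that `F = U* ε U` anticommutes with the real diagonal
matrix `Λ`, so `F i i λ i = 0`: the diagonal entries of `F` vanish away from `ker D`. Hence
`Str (f D) = tr (F f(Λ))` only sees the values of `f` at `0`, and `Str (e^{-tD²}) = Str Q` for the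
spectral projection `Q = 1_{0}(D)` onto `ker D`. Since `ε` preserves `ker D`, the operator `ε Q`
is the difference of the projections `(Q ± ε Q) / 2` onto `ker D ∩ W±`, and the trace of a
projection is the dimension of its range.
-/

open Matrix Module Unitary

namespace LinearMap

variable {K V : Type*} [Field K] [NeZero (2 : K)] [AddCommGroup V] [Module K V]
  [FiniteDimensional K V]

theorem trace_comp_eq_finrank_sub_finrank_of_isProj {e q : V →ₗ[K] V} {S : Submodule K V}
    (he : e * e = 1) (hS : ∀ x ∈ S, e x ∈ S) (hq : IsProj S q) :
    trace K V (e ∘ₗ q) = finrank K ↥(S ⊓ ker (e - 1)) - finrank K ↥(S ⊓ ker (e + 1)) := by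
  have hee (x : V) : e (e x) = x := congr($he x)
  have hplus : IsProj (S ⊓ ker (e - 1)) ((2 : K)⁻¹ • (q + e ∘ₗ q)) := by
    refine ⟨fun x => ⟨?_, ?_⟩, fun x ⟨hxS, hx⟩ => ?_⟩
    · exact S.smul_mem _ (S.add_mem (hq.map_mem x) (hS _ (hq.map_mem x)))
    · simp [hee, add_comm]
    · have hx : e x = x := sub_eq_zero.mp hx
      simp only [smul_apply, add_apply, comp_apply, hq.map_id x hxS, hx]
      rw [← two_smul K x, inv_smul_smul₀ two_ne_zero]
  have hminus : IsProj (S ⊓ ker (e + 1)) ((2 : K)⁻¹ • (q - e ∘ₗ q)) := by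
    refine ⟨fun x => ⟨?_, ?_⟩, fun x ⟨hxS, hx⟩ => ?_⟩
    · exact S.smul_mem _ (S.sub_mem (hq.map_mem x) (hS _ (hq.map_mem x)))
    · simp [hee]
    · have hx : e x = -x := eq_neg_of_add_eq_zero_left hx
      simp only [smul_apply, sub_apply, comp_apply, hq.map_id x hxS, hx, sub_neg_eq_add]
      rw [← two_smul K x, inv_smul_smul₀ two_ne_zero]
  have hsplit : e ∘ₗ q = (2 : K)⁻¹ • (q + e ∘ₗ q) - (2 : K)⁻¹ • (q - e ∘ₗ q) := by
    ext x
    simp only [coe_comp, Function.comp_apply, sub_apply, smul_apply, add_apply]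
    rw [← smul_sub, add_sub_sub_cancel, ← two_smul K, inv_smul_smul₀ two_ne_zero]
  rw [hsplit, map_sub, hplus.trace, hminus.trace]

end LinearMap

namespace Matrix

variable {n : Type*} [Fintype n] [DecidableEq n]

section Field

variable {K : Type*} [Field K] [NeZero (2 : K)]

theorem apply_self_eq_zero_of_mul_diagonal_eq_neg {F : Matrix n n K} {d : n → K}
    (hF : F * diagonal d = -(diagonal d * F)) {i : n} (hi : d i ≠ 0) : F i i = 0 := by
  have h := congrFun (congrFun hF i) i
  simp only [mul_diagonal, diagonal_mul, neg_apply] at h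
  have h2 : (2 * d i) * F i i = 0 := by linear_combination h
  simpa [hi, two_ne_zero] using h2

theorem trace_mul_diagonal_congr_of_mul_diagonal_eq_neg {F : Matrix n n K} {d g h : n → K}
    (hF : F * diagonal d = -(diagonal d * F)) (hgh : ∀ i, d i = 0 → g i = h i) :
    (F * diagonal g).trace = (F * diagonal h).trace := by
  refine Finset.sum_congr rfl fun i _ => ?_
  by_cases hi : d i = 0
  · simp only [diag_apply, mul_diagonal, hgh i hi]
  · simp [apply_self_eq_zero_of_mul_diagonal_eq_neg hF hi]

theorem trace_mul_eq_finrank_sub_finrank_of_isProj {ε Q : Matrix n n K}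
    {S : Submodule K (n → K)} (hε : ε * ε = 1) (hS : ∀ x ∈ S, ε *ᵥ x ∈ S)
    (hQ : LinearMap.IsProj S Q.mulVecLin) :
    (ε * Q).trace = finrank K ↥(S ⊓ LinearMap.ker (ε - 1).mulVecLin)
      - finrank K ↥(S ⊓ LinearMap.ker (ε + 1).mulVecLin) := by
  have he : ε.mulVecLin * ε.mulVecLin = 1 := by
    rw [Module.End.mul_eq_comp, ← mulVecLin_mul, hε, mulVecLin_one, Module.End.one_eq_id]
  have hsub : (ε - 1).mulVecLin = ε.mulVecLin - 1 := LinearMap.ext fun x => by simp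
  have hadd : (ε + 1).mulVecLin = ε.mulVecLin + 1 := LinearMap.ext fun x => by simp
  have := LinearMap.trace_comp_eq_finrank_sub_finrank_of_isProj he hS hQ
  rwa [← mulVecLin_mul, ← toLin'_apply', trace_toLin'_eq, ← hsub, ← hadd] at this

end Field

namespace IsHermitian

variable {𝕜 : Type*} [RCLike 𝕜] {ε D : Matrix n n 𝕜}

theorem trace_mul_cfc_congr_of_anticommute (hD : D.IsHermitian) (hodd : ε * D = -(D * ε))
    {f g : ℝ → ℝ} (hfg : f 0 = g 0) : (ε * cfc f D).trace = (ε * cfc g D).trace := by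
  set φ := conjStarAlgAut 𝕜 (Matrix n n 𝕜) hD.eigenvectorUnitary
  have hF : φ.symm ε * diagonal (RCLike.ofReal ∘ hD.eigenvalues)
      = -(diagonal (RCLike.ofReal ∘ hD.eigenvalues) * φ.symm ε) := by
    have := congrArg φ.symm hodd
    rwa [map_mul, map_neg, map_mul, hD.spectral_theorem, φ.symm_apply_apply] at this
  have hconj (h : ℝ → ℝ) : (ε * cfc h D).trace
      = (φ.symm ε * diagonal (RCLike.ofReal ∘ h ∘ hD.eigenvalues)).trace := by
    rw [← trace_map' φ.symm, map_mul, hD.cfc_eq, IsHermitian.cfc, φ.symm_apply_apply]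
  rw [hconj, hconj]
  exact trace_mul_diagonal_congr_of_mul_diagonal_eq_neg hF fun i hi => by simp_all

theorem exp_cfc (hD : D.IsHermitian) (f : ℝ → ℝ) :
    NormedSpace.exp (cfc f D) = cfc (Real.exp ∘ f) D := by
  rw [hD.cfc_eq, hD.cfc_eq, IsHermitian.cfc, IsHermitian.cfc, conjStarAlgAut_apply,
    conjStarAlgAut_apply]
  refine (exp_units_conj (toUnits hD.eigenvectorUnitary) _).trans ?_
  rw [exp_diagonal]
  congr 3
  funext i
  simp only [Pi.exp_def, Function.comp_apply, Real.exp_eq_exp_ℝ]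
  exact (NormedSpace.map_exp (algebraMap ℝ 𝕜) (continuous_algebraMap ℝ 𝕜) _).symm

theorem exp_smul_mul_self (hD : D.IsHermitian) (r : ℝ) :
    NormedSpace.exp ((r : 𝕜) • (D * D)) = cfc (fun x => Real.exp (r * x ^ 2)) D := by
  have := hD.exp_cfc (fun x => r * x ^ 2)
  rwa [cfc_const_mul r (· ^ 2) D, cfc_pow_id D 2 hD.isSelfAdjoint, sq,
    RCLike.real_smul_eq_coe_smul (K := 𝕜)] at this

theorem isProj_ker_cfc_indicator_zero (hD : D.IsHermitian) :
    LinearMap.IsProj (LinearMap.ker D.mulVecLin)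
      (cfc (Set.indicator {0} (1 : ℝ → ℝ)) D).mulVecLin := by
  set Q := cfc (Set.indicator {0} (1 : ℝ → ℝ)) D
  have hcont (f : ℝ → ℝ) : ContinuousOn f (spectrum ℝ D) := D.finite_real_spectrum.continuousOn f
  have hDQ : D * Q = 0 := calc
    D * Q = cfc (fun x => x * Set.indicator {0} (1 : ℝ → ℝ) x) D := by
      rw [cfc_mul _ _ D (hcont _) (hcont _), cfc_id' ℝ D hD.isSelfAdjoint]
    _ = cfc (0 : ℝ → ℝ) D := by
      congr 1
      funext x
      by_cases hx : x = 0 <;> simp [hx]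
    _ = 0 := cfc_zero ℝ D
  -- `cfc (·⁻¹) D` is the pseudo-inverse of `D`, thanks to the junk value `0⁻¹ = 0`.
  have hQR : Q + cfc (·⁻¹) D * D = 1 := calc
    Q + cfc (·⁻¹) D * D = cfc (fun x => Set.indicator {0} (1 : ℝ → ℝ) x + x⁻¹ * x) D := by
      rw [cfc_add (a := D) _ (fun x => x⁻¹ * x) (hcont _) (hcont _),
        cfc_mul _ _ D (hcont _) (hcont _), cfc_id' ℝ D hD.isSelfAdjoint]
    _ = cfc (1 : ℝ → ℝ) D := by
      congr 1
      funext x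
      by_cases hx : x = 0 <;> simp [hx]
    _ = 1 := cfc_one ℝ D
  refine ⟨fun x => ?_, fun x hx => ?_⟩
  · rw [LinearMap.mem_ker, mulVecLin_apply, mulVecLin_apply, mulVec_mulVec, hDQ, zero_mulVec]
  · rw [LinearMap.mem_ker, mulVecLin_apply] at hx
    calc Q.mulVecLin x = (Q + cfc (·⁻¹) D * D) *ᵥ x := by
          rw [add_mulVec, ← mulVec_mulVec, hx, mulVec_zero, add_zero, mulVecLin_apply]
      _ = x := by rw [hQR, one_mulVec]

end IsHermitian

end Matrix

theorem mckean_singer_finite_dim_general (k : ℕ) (ε D : Matrix (Fin k) (Fin k) ℂ)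
    (hε : ε * ε = 1) (hD : D.IsHermitian)
    (hodd : ε * D = -(D * ε)) :
    ∀ t : ℝ, 0 < t →
      (ε * NormedSpace.exp ((-t : ℂ) • (D * D))).trace
        = ((finrank ℂ ↥(LinearMap.ker (Matrix.mulVecLin D) ⊓ LinearMap.ker (Matrix.mulVecLin (ε - 1))) : ℕ) : ℂ)
          - ((finrank ℂ ↥(LinearMap.ker (Matrix.mulVecLin D) ⊓ LinearMap.ker (Matrix.mulVecLin (ε + 1))) : ℕ) : ℂ) := by
  intro t _
  have hker (x) (hx : x ∈ LinearMap.ker D.mulVecLin) : ε *ᵥ x ∈ LinearMap.ker D.mulVecLin := by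
    rw [LinearMap.mem_ker, mulVecLin_apply] at hx ⊢
    rw [mulVec_mulVec, ← neg_neg (D * ε), ← hodd, neg_mulVec, ← mulVec_mulVec, hx, mulVec_zero,
      neg_zero]
  have hexp := hD.exp_smul_mul_self (-t)
  rw [RCLike.ofReal_eq_complex_ofReal, Complex.ofReal_neg] at hexp
  rw [hexp, hD.trace_mul_cfc_congr_of_anticommute hodd (g := Set.indicator {0} 1) (by simp)]
  exact trace_mul_eq_finrank_sub_finrank_of_isProj hε hker hD.isProj_ker_cfc_indicator_zero

/-- finite-dimensional McKean–Singer: Let `W = W⁺ ⊕ W⁻` be a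
finite-dimensional `ℤ/2`-graded complex inner product space, realized as `ℂ^k` with
Hermitian grading operator `ε` satisfying `ε² = 1` (so `W± = ker(ε ∓ 1)`), and let `D`
be an odd (`εD = −Dε`) self-adjoint (Hermitian) operator. Then `t ↦ Str(e^{−tD²})` is
constant on `(0,∞)` and equals the index `dim ker(D|_{W⁺}) − dim ker(D|_{W⁻})`. -/
theorem mckean_singer_finite_dim (k : ℕ) (ε D : Matrix (Fin k) (Fin k) ℂ)
    (hεH : ε.IsHermitian) (hε : ε * ε = 1) (hD : D.IsHermitian)
    (hodd : ε * D = -(D * ε)) :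
    ∀ t : ℝ, 0 < t →
      (ε * NormedSpace.exp ((-t : ℂ) • (D * D))).trace
        = ((finrank ℂ ↥(LinearMap.ker (Matrix.mulVecLin D) ⊓ LinearMap.ker (Matrix.mulVecLin (ε - 1))) : ℕ) : ℂ)
          - ((finrank ℂ ↥(LinearMap.ker (Matrix.mulVecLin D) ⊓ LinearMap.ker (Matrix.mulVecLin (ε + 1))) : ℕ) : ℂ) :=
  mckean_singer_finite_dim_general k ε D hε hD hodd
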